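/- Let (A, μ, f) and (B, ν, g) be linking triples. If (A, μ, f) and the orthogonal sum (A × B, μ ⊕ ν, f ⊕ g) are both hyperbolic, then (B, ν, g) is metabolic. -/

import Mathlib

/-!
A hyperbolic triple is metabolic, so let `A₁ ≤ A` and `L ≤ A × B` be metabolizers. Put
`P = A₁ × B`; the image `B₁` of `L ∩ P` in `B` is isotropic for `ν` and `g` vanishes on it,
because `μ` and `f` vanish on `A₁`. It remains to count. Since `|Hom(G, ℚ/ℤ)| = |G|`, a
nondegenerate form satisfies `|H^⊥| |H| = |G|`, so a metabolizer is its own orthogonal. Thus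
`P^⊥ = A₁ × 0` and `(L + P)^⊥ = L ∩ (A₁ × 0)`, which is the kernel of `L ∩ P → B₁`. This gives
`|B₁| |A₁| = |L|`, and squaring, `|B₁|² = |B|`.
-/

/-- A linking form on a (finite) abelian group `G`: a `ℚ/ℤ`-valued pairing that is
additive in each variable, symmetric, and nondegenerate. -/
def IsLinkingForm {G : Type*} [AddCommGroup G] (l : G → G → AddCircle (1 : ℚ)) : Prop :=
  (∀ x y z : G, l (x + y) z = l x z + l y z) ∧
  (∀ x y z : G, l x (y + z) = l x y + l x z) ∧
  (∀ x y : G, l x y = l y x) ∧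
  (∀ x : G, x ≠ 0 → ∃ y : G, l x y ≠ 0)

/-- A linking triple `(G, l, f)` is metabolic if there is a subgroup `G₁` with
`|G₁|² = |G|` on which both `l` and `f` vanish. -/
def IsMetabolic {G : Type*} [AddCommGroup G]
    (l : G → G → AddCircle (1 : ℚ)) (f : G → ℚ) : Prop :=
  ∃ G₁ : AddSubgroup G, Nat.card G₁ ^ 2 = Nat.card G ∧
    (∀ x ∈ G₁, ∀ y ∈ G₁, l x y = 0) ∧ (∀ x ∈ G₁, f x = 0)

/-- A linking triple `(G, l, f)` is hyperbolic if `G = G₁ ⊕ G₂` with `G₁ ≅ G₂`,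
`l` vanishing on each of `G₁`, `G₂`, and `f` vanishing on `G₁ ∪ G₂`. -/
def IsHyperbolic {G : Type*} [AddCommGroup G]
    (l : G → G → AddCircle (1 : ℚ)) (f : G → ℚ) : Prop :=
  ∃ G₁ G₂ : AddSubgroup G,
    G₁ ⊓ G₂ = ⊥ ∧ G₁ ⊔ G₂ = ⊤ ∧ Nonempty (G₁ ≃+ G₂) ∧
    (∀ x ∈ G₁, ∀ y ∈ G₁, l x y = 0) ∧
    (∀ x ∈ G₂, ∀ y ∈ G₂, l x y = 0) ∧
    (∀ x ∈ G₁, f x = 0) ∧ (∀ x ∈ G₂, f x = 0)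

open Function

namespace AddCircle

noncomputable def ratToReal : AddCircle (1 : ℚ) →+ AddCircle (1 : ℝ) :=
  QuotientAddGroup.map _ _ (Rat.castHom ℝ).toAddMonoidHom <| by
    rw [AddSubgroup.zmultiples_le]
    exact ⟨1, by simp⟩

lemma ratToReal_injective : Injective ratToReal := by
  refine (injective_iff_map_eq_zero _).2 fun x hx => ?_
  induction x using QuotientAddGroup.induction_on with | H q => ?_
  have : ((q : ℝ) : AddCircle (1 : ℝ)) = 0 := hx
  rw [AddCircle.coe_eq_zero_iff] at this ⊢
  obtain ⟨n, hn⟩ := this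
  exact ⟨n, by rw [zsmul_eq_mul, mul_one] at hn ⊢; exact_mod_cast hn⟩

/-- `q ↦ exp (2πiq)`; it reduces counting `ℚ/ℤ`-valued characters to counting complex ones. -/
noncomputable def ratToComplexAddChar : AddChar (AddCircle (1 : ℚ)) ℂ :=
  Circle.coeHom.compAddChar (toCircle_addChar.compAddMonoidHom ratToReal)

lemma ratToComplexAddChar_injective : Injective ratToComplexAddChar :=
  Subtype.val_injective.comp ((injective_toCircle one_ne_zero).comp ratToReal_injective)

lemma injective_compAddMonoidHom_ratToComplexAddChar (G : Type*) [AddCommGroup G] :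
    Injective fun χ : G →+ AddCircle (1 : ℚ) => ratToComplexAddChar.compAddMonoidHom χ :=
  AddChar.compAddMonoidHom_injective_right _ ratToComplexAddChar_injective

end AddCircle

section Characters

variable (G : Type*) [AddCommGroup G] [Finite G]

instance : Finite (G →+ AddCircle (1 : ℚ)) :=
  Finite.of_injective _ (AddCircle.injective_compAddMonoidHom_ratToComplexAddChar G)

lemma card_addMonoidHom_addCircle_le : Nat.card (G →+ AddCircle (1 : ℚ)) ≤ Nat.card G := by
  have := Fintype.ofFinite G
  calc Nat.card (G →+ AddCircle (1 : ℚ)) ≤ Nat.card (AddChar G ℂ) :=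
        Nat.card_le_card_of_injective _
          (AddCircle.injective_compAddMonoidHom_ratToComplexAddChar G)
    _ ≤ Nat.card G := by
        simpa only [Nat.card_eq_fintype_card] using AddChar.card_addChar_le G ℂ

lemma card_addMonoidHom_addCircle : Nat.card (G →+ AddCircle (1 : ℚ)) = Nat.card G := by
  refine (card_addMonoidHom_addCircle_le G).antisymm ?_
  calc Nat.card G ≤ Nat.card ((G →+ AddCircle (1 : ℚ)) →+ AddCircle (1 : ℚ)) :=
        Nat.card_le_card_of_injective (AddMonoidHom.eval (N := AddCircle (1 : ℚ))) <|
          (injective_iff_map_eq_zero _).2 fun x hx =>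
            CharacterModule.eq_zero_of_character_apply fun c => DFunLike.congr_fun hx c
    _ ≤ Nat.card (G →+ AddCircle (1 : ℚ)) := card_addMonoidHom_addCircle_le _

end Characters

namespace AddSubgroup

variable {G : Type*} [AddCommGroup G]

lemma card_inf_mul_relIndex (H K : AddSubgroup G) :
    Nat.card (H ⊓ K : AddSubgroup G) * H.relIndex K = Nat.card K := by
  rw [← relIndex_bot_left, ← inf_relIndex_right H K,
    relIndex_mul_relIndex _ _ _ bot_le inf_le_right, relIndex_bot_left]

lemma card_sup_mul_card_inf (H K : AddSubgroup G) :
    Nat.card (H ⊔ K : AddSubgroup G) * Nat.card (H ⊓ K : AddSubgroup G) =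
      Nat.card H * Nat.card K := by
  rw [← card_inf_mul_relIndex K (H ⊔ K), inf_of_le_left le_sup_right, relIndex_sup_right,
    ← card_inf_mul_relIndex K H, inf_comm]
  ring

lemma card_map_mul_card_inf_ker {G' : Type*} [AddCommGroup G'] (H : AddSubgroup G)
    (f : G →+ G') : Nat.card (H.map f) * Nat.card (H ⊓ f.ker : AddSubgroup G) = Nat.card H := by
  rw [← relIndex_ker, mul_comm, inf_comm, card_inf_mul_relIndex]

end AddSubgroup

def IsLagrangian {G : Type*} [AddCommGroup G] (l : G → G → AddCircle (1 : ℚ))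
    (H : AddSubgroup G) : Prop :=
  (∀ x ∈ H, ∀ y ∈ H, l x y = 0) ∧ Nat.card H ^ 2 = Nat.card G

namespace IsLinkingForm

section Orth

variable {G : Type*} [AddCommGroup G] {l : G → G → AddCircle (1 : ℚ)} (hl : IsLinkingForm l)
include hl

def toAddMonoidHom : G →+ G →+ AddCircle (1 : ℚ) :=
  AddMonoidHom.mk' (fun x => AddMonoidHom.mk' (l x) (hl.2.1 x)) fun x y =>
    AddMonoidHom.ext (hl.1 x y)

@[simp]
lemma toAddMonoidHom_apply (x y : G) : hl.toAddMonoidHom x y = l x y := rfl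

lemma apply_zero_right (x : G) : l x 0 = 0 := map_zero (hl.toAddMonoidHom x)

lemma eq_zero_of_forall_apply_eq_zero {x : G} (hx : ∀ y, l x y = 0) : x = 0 := by
  by_contra hx0
  obtain ⟨y, hy⟩ := hl.2.2.2 x hx0
  exact hy (hx y)

lemma toAddMonoidHom_injective : Injective hl.toAddMonoidHom :=
  (injective_iff_map_eq_zero _).2 fun _ hx =>
    hl.eq_zero_of_forall_apply_eq_zero fun y => DFunLike.congr_fun hx y

def orth (H : AddSubgroup G) : AddSubgroup G :=
  ((AddMonoidHom.compHom' H.subtype).comp hl.toAddMonoidHom).ker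

lemma mem_orth {H : AddSubgroup G} {x : G} : x ∈ hl.orth H ↔ ∀ y ∈ H, l x y = 0 := by
  simp [orth, AddMonoidHom.ext_iff]

lemma orth_antitone : Antitone hl.orth := fun _ _ hHK _ hx =>
  hl.mem_orth.2 fun y hy => hl.mem_orth.1 hx y (hHK hy)

lemma orth_sup (H K : AddSubgroup G) : hl.orth (H ⊔ K) = hl.orth H ⊓ hl.orth K := by
  refine le_antisymm (le_inf (hl.orth_antitone le_sup_left) (hl.orth_antitone le_sup_right)) ?_
  rintro x ⟨hxH, hxK⟩
  refine hl.mem_orth.2 fun y hy => ?_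
  obtain ⟨a, ha, b, hb, rfl⟩ := AddSubgroup.mem_sup.1 hy
  rw [hl.2.1, hl.mem_orth.1 hxH a ha, hl.mem_orth.1 hxK b hb, add_zero]

lemma orth_top : hl.orth ⊤ = ⊥ :=
  (AddSubgroup.eq_bot_iff_forall _).2 fun _ hx =>
    hl.eq_zero_of_forall_apply_eq_zero fun y => hl.mem_orth.1 hx y trivial

variable [Finite G]

lemma card_orth_mul_card (H : AddSubgroup G) :
    Nat.card (hl.orth H) * Nat.card H = Nat.card G := by
  have hbij : Bijective hl.toAddMonoidHom :=
    (Nat.bijective_iff_injective_and_card _).2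
      ⟨hl.toAddMonoidHom_injective, (card_addMonoidHom_addCircle G).symm⟩
  have hres : Surjective (AddMonoidHom.compHom' H.subtype (P := AddCircle (1 : ℚ))) :=
    fun c => (CharacterModule.dual_surjective_of_injective H.subtype.toIntLinearMap
      H.subtype_injective c).imp fun _ h => h
  have hrange : ((AddMonoidHom.compHom' H.subtype).comp hl.toAddMonoidHom).range = ⊤ :=
    AddMonoidHom.range_eq_top.2 (hres.comp hbij.2)
  rw [orth, ← card_addMonoidHom_addCircle H,
    ← AddSubgroup.card_top (G := H →+ AddCircle (1 : ℚ)), ← hrange, ← AddSubgroup.index_ker,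
    AddSubgroup.card_mul_index]

lemma orth_eq_self {H : AddSubgroup G} (hH : IsLagrangian l H) : hl.orth H = H := by
  have hle : H ≤ hl.orth H := fun x hx => hl.mem_orth.2 (hH.1 x hx)
  refine (AddSubgroup.eq_of_le_of_card_ge hle ?_).symm
  rw [← Nat.mul_le_mul_right_iff (Nat.card_pos (α := H)), card_orth_mul_card, ← hH.2, sq]

end Orth

section Prod

variable {A B : Type*} [AddCommGroup A] [AddCommGroup B]
  {μ : A → A → AddCircle (1 : ℚ)} {ν : B → B → AddCircle (1 : ℚ)}
  (hμ : IsLinkingForm μ) (hν : IsLinkingForm ν)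
include hμ hν

protected lemma prod : IsLinkingForm fun x y : A × B => μ x.1 y.1 + ν x.2 y.2 := by
  refine ⟨fun x y z => ?_, fun x y z => ?_, fun x y => ?_, fun x hx => ?_⟩
  · simp only [Prod.fst_add, Prod.snd_add, hμ.1, hν.1]; abel
  · simp only [Prod.fst_add, Prod.snd_add, hμ.2.1, hν.2.1]; abel
  · simp only [hμ.2.2.1 x.1, hν.2.2.1 x.2]
  · by_contra! h
    refine hx (Prod.ext (hμ.eq_zero_of_forall_apply_eq_zero fun a => ?_)
      (hν.eq_zero_of_forall_apply_eq_zero fun b => ?_))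
    · simpa [hν.apply_zero_right] using h (a, 0)
    · simpa [hμ.apply_zero_right] using h (0, b)

lemma orth_prod (H : AddSubgroup A) (K : AddSubgroup B) :
    (hμ.prod hν).orth (H.prod K) = (hμ.orth H).prod (hν.orth K) := by
  ext ⟨a, b⟩
  simp only [mem_orth, AddSubgroup.mem_prod, Prod.forall]
  constructor
  · intro h
    exact ⟨fun y hy => by simpa [hν.apply_zero_right] using h y 0 ⟨hy, K.zero_mem⟩,
      fun z hz => by simpa [hμ.apply_zero_right] using h 0 z ⟨H.zero_mem, hz⟩⟩
  · rintro ⟨ha, hb⟩ y z ⟨hy, hz⟩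
    rw [ha y hy, hb z hz, add_zero]

end Prod

end IsLinkingForm

section Reduction

variable {A B : Type*} [AddCommGroup A] [AddCommGroup B] [Finite A] [Finite B]
  {μ : A → A → AddCircle (1 : ℚ)} {ν : B → B → AddCircle (1 : ℚ)}
  {A₁ : AddSubgroup A} {L : AddSubgroup (A × B)}

lemma IsLagrangian.orth_sup_prod_top (hμ : IsLinkingForm μ) (hν : IsLinkingForm ν)
    (hA₁ : IsLagrangian μ A₁) (hL : IsLagrangian (fun x y : A × B => μ x.1 y.1 + ν x.2 y.2) L) :
    (hμ.prod hν).orth (L ⊔ A₁.prod ⊤) = L ⊓ A₁.prod ⊥ := by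
  rw [IsLinkingForm.orth_sup, (hμ.prod hν).orth_eq_self hL, hμ.orth_prod hν,
    hμ.orth_eq_self hA₁, hν.orth_top]

lemma card_map_snd_inf_prod_sq (hμ : IsLinkingForm μ) (hν : IsLinkingForm ν)
    (hA₁ : IsLagrangian μ A₁) (hL : IsLagrangian (fun x y : A × B => μ x.1 y.1 + ν x.2 y.2) L) :
    Nat.card ((L ⊓ A₁.prod ⊤).map (AddMonoidHom.snd A B)) ^ 2 = Nat.card B := by
  set P := A₁.prod (⊤ : AddSubgroup B)
  set V := A₁.prod (⊥ : AddSubgroup B)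
  have hker : L ⊓ P ⊓ (AddMonoidHom.snd A B).ker = L ⊓ V := by
    rw [AddMonoidHom.ker_snd, inf_assoc]
    congr 1
    ext
    simp [P, V, AddSubgroup.mem_prod]
  set b := Nat.card ((L ⊓ P).map (AddMonoidHom.snd A B))
  have hmap : b * Nat.card (L ⊓ V : AddSubgroup (A × B)) = Nat.card (L ⊓ P : AddSubgroup _) :=
    hker ▸ (L ⊓ P).card_map_mul_card_inf_ker (AddMonoidHom.snd A B)
  have horth : Nat.card (L ⊓ V : AddSubgroup (A × B)) * Nat.card (L ⊔ P : AddSubgroup _) =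
      Nat.card A₁ ^ 2 * Nat.card B := by
    rw [← hA₁.orth_sup_prod_top hμ hν hL, (hμ.prod hν).card_orth_mul_card, Nat.card_prod, hA₁.2]
  have hP : Nat.card P = Nat.card A₁ * Nat.card B := by
    rw [Nat.card_congr (A₁.prodEquiv ⊤).toEquiv, Nat.card_prod, AddSubgroup.card_top]
  have hA₁pos : 0 < Nat.card A₁ := Nat.card_pos
  have hcardL : b * Nat.card A₁ = Nat.card L := by
    refine Nat.eq_of_mul_eq_mul_right (mul_pos hA₁pos (Nat.card_pos (α := B))) ?_
    calc b * Nat.card A₁ * (Nat.card A₁ * Nat.card B)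
        = b * Nat.card (L ⊓ V : AddSubgroup (A × B)) * Nat.card (L ⊔ P : AddSubgroup _) := by
          rw [mul_assoc b (Nat.card (L ⊓ V : AddSubgroup (A × B))), horth]; ring
      _ = Nat.card (L ⊔ P : AddSubgroup (A × B)) * Nat.card (L ⊓ P : AddSubgroup _) := by
          rw [hmap, mul_comm]
      _ = Nat.card L * (Nat.card A₁ * Nat.card B) := by rw [L.card_sup_mul_card_inf P, hP]
  refine Nat.eq_of_mul_eq_mul_right (pow_pos hA₁pos 2) ?_
  rw [← mul_pow, hcardL, hL.2, Nat.card_prod, ← hA₁.2, mul_comm]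

lemma IsLagrangian.map_snd_inf_prod (hμ : IsLinkingForm μ) (hν : IsLinkingForm ν)
    (hA₁ : IsLagrangian μ A₁) (hL : IsLagrangian (fun x y : A × B => μ x.1 y.1 + ν x.2 y.2) L) :
    IsLagrangian ν ((L ⊓ A₁.prod ⊤).map (AddMonoidHom.snd A B)) := by
  refine ⟨?_, card_map_snd_inf_prod_sq hμ hν hA₁ hL⟩
  rintro _ ⟨⟨a, b⟩, ⟨hab, ha⟩, rfl⟩ _ ⟨⟨a', b'⟩, ⟨hab', ha'⟩, rfl⟩
  simpa [hA₁.1 a ha.1 a' ha'.1] using hL.1 _ hab _ hab'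

lemma IsMetabolic.of_prod {f : A → ℚ} {g : B → ℚ} (hμ : IsLinkingForm μ) (hν : IsLinkingForm ν)
    (hA : IsMetabolic μ f)
    (hAB : IsMetabolic (fun x y : A × B => μ x.1 y.1 + ν x.2 y.2) fun x => f x.1 + g x.2) :
    IsMetabolic ν g := by
  obtain ⟨A₁, hA₁card, hA₁iso, hA₁f⟩ := hA
  obtain ⟨L, hLcard, hLiso, hLf⟩ := hAB
  obtain ⟨hiso, hcard⟩ := IsLagrangian.map_snd_inf_prod hμ hν ⟨hA₁iso, hA₁card⟩ ⟨hLiso, hLcard⟩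
  refine ⟨_, hcard, hiso, ?_⟩
  rintro _ ⟨⟨a, b⟩, ⟨hab, ha⟩, rfl⟩
  simpa [hA₁f a ha.1] using hLf _ hab

end Reduction

lemma IsHyperbolic.isMetabolic {G : Type*} [AddCommGroup G] {l : G → G → AddCircle (1 : ℚ)}
    {f : G → ℚ} (h : IsHyperbolic l f) : IsMetabolic l f := by
  obtain ⟨G₁, G₂, hinf, hsup, ⟨e⟩, hl₁, -, hf₁, -⟩ := h
  refine ⟨G₁, ?_, hl₁, hf₁⟩
  have hcard := G₁.card_sup_mul_card_inf G₂
  rw [hinf, hsup, AddSubgroup.card_top, AddSubgroup.card_bot, mul_one] at hcard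
  rw [sq, hcard, Nat.card_congr e.toEquiv]

/-- If `(A, μ, f)` and `(A × B, μ ⊕ ν, f ⊕ g)` are both hyperbolic, then
`(B, ν, g)` is metabolic. -/
theorem stmt1 {A B : Type*} [AddCommGroup A] [Finite A] [AddCommGroup B] [Finite B]
    (μ : A → A → AddCircle (1 : ℚ)) (f : A → ℚ)
    (ν : B → B → AddCircle (1 : ℚ)) (g : B → ℚ)
    (hμ : IsLinkingForm μ) (hν : IsLinkingForm ν)
    (hA : IsHyperbolic μ f)
    (hAB : IsHyperbolic (fun x y : A × B => μ x.1 y.1 + ν x.2 y.2)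
      (fun x : A × B => f x.1 + g x.2)) :
    IsMetabolic ν g :=
  IsMetabolic.of_prod hμ hν hA.isMetabolic hAB.isMetabolic
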